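/- With C the general symmetric Choi operator (parameters c₁,…,c₆ as in the paper) and D the decoherence map in the |±⟩ basis, the condition (D⊗D)∘B∘D = B_cl (classical consistency on the |±⟩ basis) holds if and only if c₃ = 1 − c₂, c₅ = c₄ − 1/2, and c₆ = 2 − c₁ − 4c₄. -/

import Mathlib

open Matrix Complex

noncomputable section

/-- The general Choi operator (Eq. (12)) of a map satisfying phase covariance,
flip covariance and permutation invariance. -/
noncomputable def Cgen (c1 c2 c3 c4 c5 c6 : ℂ) : Matrix (Fin 8) (Fin 8) ℂ :=
  !![c1, 0, 0, c2, 0, c2, 0, 0;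
     0, c6, 0, 0, 0, 0, 0, 0;
     0, 0, c4+c5, 0, c4-c5, 0, 0, c3;
     c3, 0, 0, c4+c5, 0, c4-c5, 0, 0;
     0, 0, c4-c5, 0, c4+c5, 0, 0, c3;
     c3, 0, 0, c4-c5, 0, c4+c5, 0, 0;
     0, 0, 0, 0, 0, 0, c6, 0;
     0, 0, c2, 0, c2, 0, 0, c1]

def idx (m : Fin 4) (k : Fin 2) : Fin 8 :=
  ⟨2 * m.val + k.val, by have := m.isLt; have := k.isLt; omega⟩

noncomputable def ptrace12 (C : Matrix (Fin 8) (Fin 8) ℂ) : Matrix (Fin 2) (Fin 2) ℂ :=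
  Matrix.of fun k l => ∑ m : Fin 4, C (idx m k) (idx m l)

def pr (a b : Fin 2) : Fin 4 :=
  ⟨2 * a.val + b.val, by have := a.isLt; have := b.isLt; omega⟩

/-- The map with Choi operator `C` (third tensor factor = input):
`B(ρ) = Tr₃[(1 ⊗ ρᵀ) C]`, in components. -/
noncomputable def Bof (C : Matrix (Fin 8) (Fin 8) ℂ) (ρ : Matrix (Fin 2) (Fin 2) ℂ) :
    Matrix (Fin 4) (Fin 4) ℂ :=
  Matrix.of fun m n => ∑ k : Fin 2, ∑ k' : Fin 2, ρ k' k * C (idx m k') (idx n k)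

/-- Partial trace over the first output qubit. -/
noncomputable def tr1 (M : Matrix (Fin 4) (Fin 4) ℂ) : Matrix (Fin 2) (Fin 2) ℂ :=
  Matrix.of fun b b' => ∑ a : Fin 2, M (pr a b) (pr a b')

/-- Partial trace over the second output qubit. -/
noncomputable def tr2 (M : Matrix (Fin 4) (Fin 4) ℂ) : Matrix (Fin 2) (Fin 2) ℂ :=
  Matrix.of fun a a' => ∑ b : Fin 2, M (pr a b) (pr a' b)

def d1 (p : Fin 4) : Fin 2 := ⟨p.val / 2, by have := p.isLt; omega⟩
def d2 (p : Fin 4) : Fin 2 := ⟨p.val % 2, by omega⟩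

/-- The `|±⟩` basis vectors: `uvec 0 = |+⟩`, `uvec 1 = |−⟩`. -/
noncomputable def uvec (s k : Fin 2) : ℂ :=
  (if s = 1 ∧ k = 1 then -1 else 1) / (Real.sqrt 2 : ℝ)

/-- Two-qubit product vectors `|s t⟩` in the `|±⟩` basis. -/
noncomputable def wvec (s t : Fin 2) (p : Fin 4) : ℂ := uvec s (d1 p) * uvec t (d2 p)

/-- The decoherence map `D` in the `|±⟩` basis. -/
noncomputable def Dmap (ρ : Matrix (Fin 2) (Fin 2) ℂ) : Matrix (Fin 2) (Fin 2) ℂ :=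
  Matrix.of fun i j => ∑ s : Fin 2,
    uvec s i * uvec s j * ∑ k : Fin 2, ∑ l : Fin 2, uvec s k * ρ k l * uvec s l

/-- The two-qubit decoherence map `D ⊗ D` in the `|±⟩` basis. -/
noncomputable def DDmap (M : Matrix (Fin 4) (Fin 4) ℂ) : Matrix (Fin 4) (Fin 4) ℂ :=
  Matrix.of fun p q => ∑ s : Fin 2, ∑ t : Fin 2,
    wvec s t p * wvec s t q * ∑ p' : Fin 4, ∑ q' : Fin 4, wvec s t p' * M p' q' * wvec s t q'

/-- The classical broadcasting map in the `|±⟩` basis: `B_cl(|s⟩⟨t|) = δ_{st}|ss⟩⟨ss|`. -/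
noncomputable def Bcl (ρ : Matrix (Fin 2) (Fin 2) ℂ) : Matrix (Fin 4) (Fin 4) ℂ :=
  Matrix.of fun p q => ∑ s : Fin 2,
    wvec s s p * wvec s s q * ∑ k : Fin 2, ∑ l : Fin 2, uvec s k * ρ k l * uvec s l


/-!
Both `D` and `D ⊗ D` are dephasings `M ↦ ∑ᵢ ⟨bᵢ|M|bᵢ⟩ |bᵢ⟩⟨bᵢ|` in orthonormal bases, and an
operator diagonal in an orthonormal basis is determined by its diagonal. So the condition says
exactly that `⟨t u|B(|s⟩⟨s|)|t u⟩ = ⟨t u s|C|t u s⟩` equals `δₜₛ δᵤₛ` for all `t u s ∈ {+, −}`.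
For the Choi operator of Eq. (12) this diagonal entry is
`(c₁ + c₆ + 2c₄ + 2c₅)/4 ± (c₄ − c₅)/2 + (c₂ + c₃)(±1 ± 1)/4`, and the eight equations reduce
to the three linear conditions of the statement.
-/

section Diagonal

variable {ι n R : Type*} [Fintype ι] [DecidableEq ι] [Fintype n] [CommRing R]

def diagIn (b : ι → n → R) (a : ι → R) : Matrix n n R :=
  ∑ i, a i • vecMulVec (b i) (b i)

theorem dotProduct_vecMulVec_mulVec (x a b y : n → R) :
    x ⬝ᵥ vecMulVec a b *ᵥ y = (x ⬝ᵥ a) * (b ⬝ᵥ y) := by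
  rw [vecMulVec_mulVec, op_smul_eq_smul, dotProduct_smul, smul_eq_mul, mul_comm]

variable {b : ι → n → R}

theorem dotProduct_diagIn_mulVec (hb : ∀ i j, b i ⬝ᵥ b j = if i = j then 1 else 0)
    (a : ι → R) (j : ι) : b j ⬝ᵥ diagIn b a *ᵥ b j = a j := by
  simp [diagIn, sum_mulVec, dotProduct_sum, smul_mulVec, dotProduct_smul,
    dotProduct_vecMulVec_mulVec, hb]

theorem diagIn_injective (hb : ∀ i j, b i ⬝ᵥ b j = if i = j then 1 else 0) :
    Function.Injective (diagIn b) := fun a a' h => funext fun j => by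
  rw [← dotProduct_diagIn_mulVec hb a j, h, dotProduct_diagIn_mulVec hb]

theorem forall_sum_dotProduct_mulVec_mul_eq_iff
    (hb : ∀ i j, b i ⬝ᵥ b j = if i = j then 1 else 0) (x y : ι → R) :
    (∀ ρ : Matrix n n R, ∑ i, (b i ⬝ᵥ ρ *ᵥ b i) * x i = ∑ i, (b i ⬝ᵥ ρ *ᵥ b i) * y i) ↔
      x = y := by
  refine ⟨fun h => funext fun j => ?_, fun h _ => h ▸ rfl⟩
  simpa [dotProduct_vecMulVec_mulVec, hb, ite_and] using h (vecMulVec (b j) (b j))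

end Diagonal

theorem uvec_dotProduct_uvec (s s' : Fin 2) : uvec s ⬝ᵥ uvec s' = if s = s' then 1 else 0 := by
  have h : ((√2 : ℝ) : ℂ) ^ 2 = 2 := by rw [← ofReal_pow]; simp
  fin_cases s <;> fin_cases s' <;> norm_num [dotProduct, uvec, neg_div, ← mul_inv, ← pow_two, h]

theorem sum_comp_d1_d2 {M : Type*} [AddCommMonoid M] (f : Fin 2 → Fin 2 → M) :
    ∑ p : Fin 4, f (d1 p) (d2 p) = ∑ a, ∑ b, f a b := by
  simp [Fin.sum_univ_four, Fin.sum_univ_two, d1, d2, add_assoc]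

theorem wvec_dotProduct_wvec (s t s' t' : Fin 2) :
    wvec s t ⬝ᵥ wvec s' t' = (uvec s ⬝ᵥ uvec s') * (uvec t ⬝ᵥ uvec t') := by
  simp only [dotProduct, wvec, Finset.sum_mul_sum]
  rw [← sum_comp_d1_d2 fun a b => uvec s a * uvec s' a * (uvec t b * uvec t' b)]
  exact Finset.sum_congr rfl fun p _ => by ring

theorem uncurry_wvec_dotProduct_uncurry_wvec (p q : Fin 2 × Fin 2) :
    Function.uncurry wvec p ⬝ᵥ Function.uncurry wvec q = if p = q then 1 else 0 := by
  rw [Function.uncurry_def, wvec_dotProduct_wvec, uvec_dotProduct_uvec, uvec_dotProduct_uvec,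
    ite_zero_mul_ite_zero, one_mul]
  simp only [Prod.ext_iff]

theorem Dmap_eq_diagIn (ρ : Matrix (Fin 2) (Fin 2) ℂ) :
    Dmap ρ = diagIn uvec fun s => uvec s ⬝ᵥ ρ *ᵥ uvec s := by
  ext i j
  simp only [Dmap, diagIn, dotProduct, mulVec, Fin.sum_univ_two, of_apply, Matrix.add_apply,
    Matrix.smul_apply, vecMulVec_apply, smul_eq_mul]
  ring

theorem DDmap_eq_diagIn (M : Matrix (Fin 4) (Fin 4) ℂ) :
    DDmap M = diagIn (Function.uncurry wvec) fun p =>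
      Function.uncurry wvec p ⬝ᵥ M *ᵥ Function.uncurry wvec p := by
  ext i j
  simp only [DDmap, diagIn, dotProduct, mulVec, Fintype.sum_prod_type, Function.uncurry_apply_pair,
    Fin.sum_univ_two, Fin.sum_univ_four, of_apply, Matrix.add_apply, Matrix.smul_apply,
    vecMulVec_apply, smul_eq_mul]
  ring

theorem Bcl_eq_diagIn (ρ : Matrix (Fin 2) (Fin 2) ℂ) :
    Bcl ρ = diagIn (Function.uncurry wvec) fun p =>
      ∑ s, (uvec s ⬝ᵥ ρ *ᵥ uvec s) * if p.1 = s ∧ p.2 = s then 1 else 0 := by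
  ext i j
  simp only [Bcl, diagIn, dotProduct, mulVec, Fintype.sum_prod_type, Function.uncurry_apply_pair,
    Fin.sum_univ_two, of_apply, Matrix.add_apply, Matrix.smul_apply, vecMulVec_apply, smul_eq_mul,
    Fin.isValue, and_true, and_false, zero_ne_one, one_ne_zero, ↓reduceIte]
  ring

/-- `(w ⊗ x)ᵀ C (w ⊗ x)`, with the output `w` and the input `x` combined as in `idx`. -/
def choiForm (C : Matrix (Fin 8) (Fin 8) ℂ) (w : Fin 4 → ℂ) (x : Fin 2 → ℂ) : ℂ :=
  ∑ m, ∑ k, ∑ n, ∑ l, w m * x k * C (idx m k) (idx n l) * (w n * x l)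

theorem Bof_sum {ι : Type*} (C : Matrix (Fin 8) (Fin 8) ℂ) (s : Finset ι)
    (ρ : ι → Matrix (Fin 2) (Fin 2) ℂ) : Bof C (∑ i ∈ s, ρ i) = ∑ i ∈ s, Bof C (ρ i) := by
  ext m n
  simp only [Bof, Matrix.sum_apply, of_apply, Finset.sum_mul]
  exact (Finset.sum_comm.trans (Finset.sum_congr rfl fun _ _ => Finset.sum_comm)).symm

theorem Bof_smul (C : Matrix (Fin 8) (Fin 8) ℂ) (a : ℂ) (ρ : Matrix (Fin 2) (Fin 2) ℂ) :
    Bof C (a • ρ) = a • Bof C ρ := by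
  ext m n
  simp only [Bof, Matrix.smul_apply, of_apply, smul_eq_mul, Finset.mul_sum, mul_assoc]

theorem dotProduct_Bof_vecMulVec_mulVec (C : Matrix (Fin 8) (Fin 8) ℂ) (w : Fin 4 → ℂ)
    (x : Fin 2 → ℂ) : w ⬝ᵥ Bof C (vecMulVec x x) *ᵥ w = choiForm C w x := by
  simp only [choiForm, Bof, dotProduct, mulVec, of_apply, vecMulVec_apply, Fin.sum_univ_two]
  refine Finset.sum_congr rfl fun m _ => ?_
  rw [Finset.mul_sum, ← Finset.sum_add_distrib]
  exact Finset.sum_congr rfl fun n _ => by ring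

theorem dotProduct_Bof_diagIn_mulVec {ι : Type*} [Fintype ι] (C : Matrix (Fin 8) (Fin 8) ℂ)
    (w : Fin 4 → ℂ) (x : ι → Fin 2 → ℂ) (a : ι → ℂ) :
    w ⬝ᵥ Bof C (diagIn x a) *ᵥ w = ∑ i, a i * choiForm C w (x i) := by
  simp only [diagIn, Bof_sum, Bof_smul, sum_mulVec, dotProduct_sum, smul_mulVec, dotProduct_smul,
    dotProduct_Bof_vecMulVec_mulVec, smul_eq_mul]

theorem DDmap_Bof_Dmap_eq_Bcl_iff (C : Matrix (Fin 8) (Fin 8) ℂ) :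
    (∀ ρ, DDmap (Bof C (Dmap ρ)) = Bcl ρ) ↔
      ∀ t u s, choiForm C (wvec t u) (uvec s) = if t = s ∧ u = s then 1 else 0 := by
  simp only [DDmap_eq_diagIn, Bcl_eq_diagIn, Dmap_eq_diagIn,
    (diagIn_injective uncurry_wvec_dotProduct_uncurry_wvec).eq_iff, funext_iff,
    dotProduct_Bof_diagIn_mulVec]
  rw [forall_comm]
  simp only [forall_sum_dotProduct_mulVec_mul_eq_iff uvec_dotProduct_uvec, funext_iff,
    Prod.forall, Function.uncurry_apply_pair]

theorem choiForm_Cgen (c1 c2 c3 c4 c5 c6 : ℂ) (t u s : Fin 2) :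
    choiForm (Cgen c1 c2 c3 c4 c5 c6) (wvec t u) (uvec s) =
      (c1 + c6 + 2 * c4 + 2 * c5) / 4 + (c4 - c5) / 2 * (if t = u then 1 else -1) +
        (c2 + c3) / 4 * ((if t = s then 1 else -1) + (if u = s then 1 else -1)) := by
  have h : ((√2 : ℝ) : ℂ) ^ 6 = 8 := by
    rw [show ((√2 : ℝ) : ℂ) ^ 6 = (((√2) ^ 2 : ℝ) : ℂ) ^ 3 by push_cast; ring]
    norm_num
  fin_cases t <;> fin_cases u <;> fin_cases s <;>
  · simp [choiForm, wvec, uvec, d1, d2, Fin.sum_univ_four, Fin.sum_univ_two, idx, Cgen]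
    field_simp
    rw [h]
    ring

/-- Classical consistency `(D⊗D)∘B∘D = B_cl` holds iff `c₃ = 1 − c₂`,
`c₅ = c₄ − 1/2` and `c₆ = 2 − c₁ − 4c₄`. -/
theorem classic_iff (c1 c4 : ℝ) (c2 c3 c5 c6 : ℂ) :
    (∀ ρ : Matrix (Fin 2) (Fin 2) ℂ,
        DDmap (Bof (Cgen (c1 : ℂ) c2 c3 (c4 : ℂ) c5 c6) (Dmap ρ)) = Bcl ρ) ↔
      (c3 = 1 - c2 ∧ c5 = (c4 : ℂ) - 1/2 ∧ c6 = 2 - (c1 : ℂ) - 4 * (c4 : ℂ)) := by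
  simp only [DDmap_Bof_Dmap_eq_Bcl_iff, choiForm_Cgen]
  constructor
  · intro h
    have h000 := h 0 0 0
    have h001 := h 0 0 1
    have h010 := h 0 1 0
    simp only [Fin.isValue, ↓reduceIte, zero_ne_one, one_ne_zero, and_self, and_false, mul_one,
      mul_neg] at h000 h001 h010
    exact ⟨by linear_combination h000 - h001,
      by linear_combination (-1 / 2 : ℂ) * (h000 + h001 - 2 * h010),
      by linear_combination 2 * (h000 + h001)⟩
  · rintro ⟨rfl, rfl, rfl⟩ t u s
    fin_cases t <;> fin_cases u <;> fin_cases s <;> norm_num <;> ring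

end
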